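/- For every (H, W, b) ∈ S, the empirical risk satisfies R_e(H, W, b) = (1/2)·‖W W^⊤ − √N·(I_C − (1/C)·1_C 1_C^⊤)‖_F² + (CN/2)·‖b − (1/C)·1_C‖₂². Consequently, for (H, W, b) ∈ S, R_e(H, W, b) = 0 if and only if (H, W, b) exhibits strong neural collapse; i.e., the global minimizers of R_e restricted to S are precisely the points exhibiting strong neural collapse. -/

import Mathlib

open Matrix

noncomputable section

/-- Membership in the subspace
`S = {(H, W, b) : H = (1/√N)(W ⊗ 1_N)ᵀ, 1_Cᵀ W = 0, b ∈ span{1_C}}`;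
the `CN` columns are indexed by `Fin C × Fin N`. -/
def memS (C N p : ℕ) (H : Matrix (Fin p) (Fin C × Fin N) ℝ)
    (W : Matrix (Fin C) (Fin p) ℝ) (b : Fin C → ℝ) : Prop :=
  H = Matrix.of (fun j (cn : Fin C × Fin N) => (Real.sqrt N)⁻¹ * W cn.1 j) ∧
  (∀ j : Fin p, ∑ c : Fin C, W c j = 0) ∧
  (∃ β : ℝ, b = fun _ => β)

/-- Strong neural collapse: `W Wᵀ = √N (I_C - (1/C) 1_C 1_Cᵀ)`,
`H = (1/√N)(W ⊗ 1_N)ᵀ`, and `b = (1/C) 1_C`. -/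
def SNC (C N p : ℕ) (H : Matrix (Fin p) (Fin C × Fin N) ℝ)
    (W : Matrix (Fin C) (Fin p) ℝ) (b : Fin C → ℝ) : Prop :=
  W * Wᵀ = Real.sqrt N •
    ((1 : Matrix (Fin C) (Fin C) ℝ) - (C : ℝ)⁻¹ • Matrix.of (fun _ _ => (1 : ℝ))) ∧
  H = Matrix.of (fun j (cn : Fin C × Fin N) => (Real.sqrt N)⁻¹ * W cn.1 j) ∧
  b = fun _ => (C : ℝ)⁻¹

/-- The empirical risk `R_e(H, W, b) = (1/2) ‖W H + b 1_{CN}ᵀ - I_C ⊗ 1_Nᵀ‖_F²`. -/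
def Re (C N p : ℕ) (H : Matrix (Fin p) (Fin C × Fin N) ℝ)
    (W : Matrix (Fin C) (Fin p) ℝ) (b : Fin C → ℝ) : ℝ :=
  (1 / 2) * ∑ c : Fin C, ∑ cn : Fin C × Fin N,
    ((W * H) c cn + b c - if cn.1 = c then 1 else 0) ^ 2

/-! On `S` every column of `H` is `1/√N` times a row of `W`, so `W H` consists of `N` copies of
`(1/√N) G` with `G = W Wᵀ`, and since `N = (√N)²` the risk becomes
`(1/2) ‖(G - √N P) + √N (β - 1/C) 1 1ᵀ‖_F²`, `P` the centering matrix. As `1_Cᵀ W = 0`, every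
row of `G - √N P` sums to zero, so the cross term with the constant matrix vanishes. -/

theorem sum_mul_transpose_apply_eq_zero {R m n : Type*} [Fintype m] [Fintype n] [Semiring R]
    (W : Matrix m n R) (hW : ∀ j, ∑ c, W c j = 0) (a : m) : ∑ c, (W * Wᵀ) a c = 0 := by
  simp only [mul_apply, transpose_apply]
  rw [Finset.sum_comm]
  simp [← Finset.mul_sum, hW]

theorem mul_of_smul_fst_apply {R l m n k : Type*} [Fintype m] [CommSemiring R]
    (W : Matrix l m R) (V : Matrix n m R) (r : R) (a : l) (cn : n × k) :
    (W * of fun j (cn : n × k) => r * V cn.1 j) a cn = r * (W * Vᵀ) a cn.1 := by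
  simp only [mul_apply, of_apply, transpose_apply, Finset.mul_sum]
  exact Finset.sum_congr rfl fun j _ => by ring

theorem sum_ite_eq_sub_inv_card {K ι : Type*} [Field K] [CharZero K] [Fintype ι] [DecidableEq ι]
    (a : ι) :
    ∑ c : ι, ((if c = a then 1 else 0) - (Fintype.card ι : K)⁻¹) = 0 := by
  have : (Fintype.card ι : K) ≠ 0 := Nat.cast_ne_zero.2 (Fintype.card_pos_iff.2 ⟨a⟩).ne'
  simp [Finset.sum_sub_distrib, this]

theorem smul_one_sub_smul_of_one_apply {K ι : Type*} [Field K] [DecidableEq ι]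
    (r t : K) (i j : ι) :
    (r • ((1 : Matrix ι ι K) - t • of fun _ _ => (1 : K)) : Matrix ι ι K) i j
      = r * ((if j = i then 1 else 0) - t) := by
  simp [one_apply, eq_comm]

theorem sum_add_sq_of_sum_eq_zero {R ι : Type*} [CommRing R] (s : Finset ι) (x : ι → R) (y : R)
    (hx : ∑ i ∈ s, x i = 0) : ∑ i ∈ s, (x i + y) ^ 2 = ∑ i ∈ s, x i ^ 2 + s.card * y ^ 2 := by
  simp only [add_sq, Finset.sum_add_distrib, ← Finset.sum_mul, ← Finset.mul_sum, hx,
    Finset.sum_const, nsmul_eq_mul]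
  ring

theorem sum_sq_eq_zero_iff {R ι : Type*} [Fintype ι] [Ring R] [LinearOrder R]
    [IsStrictOrderedRing R] (f : ι → R) : ∑ i, f i ^ 2 = 0 ↔ ∀ i, f i = 0 := by
  simp [Fintype.sum_eq_zero_iff_of_nonneg fun i => sq_nonneg (f i), funext_iff]

theorem Re_of_smul_fst_eq_sum_sq (C N p : ℕ) (hN : 0 < N) (W : Matrix (Fin C) (Fin p) ℝ)
    (β : ℝ) :
    Re C N p (of fun j (cn : Fin C × Fin N) => (Real.sqrt N)⁻¹ * W cn.1 j) W (fun _ => β)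
      = (1 / 2) * ∑ a : Fin C, ∑ c : Fin C,
          ((W * Wᵀ) a c - Real.sqrt N * ((if c = a then 1 else 0) - (C : ℝ)⁻¹)
            + Real.sqrt N * (β - (C : ℝ)⁻¹)) ^ 2 := by
  have hs : Real.sqrt N ≠ 0 := by positivity
  unfold Re
  congr 1
  refine Finset.sum_congr rfl fun a _ => ?_
  rw [Fintype.sum_prod_type]
  refine Finset.sum_congr rfl fun c _ => ?_
  calc ∑ _n : Fin N, _
      = ∑ _n : Fin N, ((Real.sqrt N)⁻¹ * (W * Wᵀ) a c + β - if c = a then 1 else 0) ^ 2 :=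
        Finset.sum_congr rfl fun n _ => by rw [mul_of_smul_fst_apply]
    _ = (Real.sqrt N * ((Real.sqrt N)⁻¹ * (W * Wᵀ) a c + β - if c = a then 1 else 0)) ^ 2 := by
        rw [Fin.sum_const, nsmul_eq_mul, mul_pow, Real.sq_sqrt (Nat.cast_nonneg N)]
    _ = _ := by congr 1; field_simp; ring

theorem Re_eq_of_memS (C N p : ℕ) (hN : 0 < N) (H : Matrix (Fin p) (Fin C × Fin N) ℝ)
    (W : Matrix (Fin C) (Fin p) ℝ) (b : Fin C → ℝ) (hS : memS C N p H W b) :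
    Re C N p H W b
      = (1 / 2) * ∑ c : Fin C, ∑ c' : Fin C,
          ((W * Wᵀ) c c' - Real.sqrt N * ((if c' = c then 1 else 0) - (C : ℝ)⁻¹)) ^ 2
        + ((C * N : ℝ) / 2) * ∑ c : Fin C, (b c - (C : ℝ)⁻¹) ^ 2 := by
  obtain ⟨rfl, hW, β, rfl⟩ := hS
  have hrow (a : Fin C) :
      ∑ c, ((W * Wᵀ) a c - Real.sqrt N * ((if c = a then 1 else 0) - (C : ℝ)⁻¹)) = 0 := by
    have hcentre : ∑ c : Fin C, ((if c = a then 1 else 0) - (C : ℝ)⁻¹) = 0 := by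
      simpa using sum_ite_eq_sub_inv_card (K := ℝ) a
    rw [Finset.sum_sub_distrib, ← Finset.mul_sum, sum_mul_transpose_apply_eq_zero W hW a,
      hcentre, mul_zero, sub_zero]
  rw [Re_of_smul_fst_eq_sum_sq C N p hN W β]
  simp only [sum_add_sq_of_sum_eq_zero _ _ _ (hrow _), Finset.sum_add_distrib, Finset.card_univ,
    Fintype.card_fin, Finset.sum_const, nsmul_eq_mul, mul_pow, Real.sq_sqrt (Nat.cast_nonneg N)]
  ring

theorem empirical_risk_on_S_general (C N p : ℕ) (hC : 0 < C) (hN : 0 < N)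
    (H : Matrix (Fin p) (Fin C × Fin N) ℝ) (W : Matrix (Fin C) (Fin p) ℝ) (b : Fin C → ℝ)
    (hS : memS C N p H W b) :
    Re C N p H W b
      = (1 / 2) * ∑ c : Fin C, ∑ c' : Fin C,
          ((W * Wᵀ) c c' - Real.sqrt N * ((if c' = c then 1 else 0) - (C : ℝ)⁻¹)) ^ 2
        + ((C * N : ℝ) / 2) * ∑ c : Fin C, (b c - (C : ℝ)⁻¹) ^ 2 ∧
    (Re C N p H W b = 0 ↔ SNC C N p H W b) := by
  have hRe := Re_eq_of_memS C N p hN H W b hS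
  refine ⟨hRe, ?_⟩
  have hCN : (C * N : ℝ) / 2 ≠ 0 := by positivity
  rw [hRe, add_eq_zero_iff_of_nonneg (by positivity) (by positivity), mul_eq_zero, mul_eq_zero,
    or_iff_right (by norm_num), or_iff_right hCN]
  simp only [← Fintype.sum_prod_type', sum_sq_eq_zero_iff, Prod.forall, SNC, ← Matrix.ext_iff,
    smul_one_sub_smul_of_one_apply, funext_iff, sub_eq_zero, hS.1, true_and]

/-- **Statement 19.** For every `(H, W, b) ∈ S`,
`R_e(H,W,b) = (1/2) ‖W Wᵀ - √N (I_C - (1/C) 1_C 1_Cᵀ)‖_F² + (CN/2) ‖b - (1/C) 1_C‖₂²`.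
Consequently, for `(H, W, b) ∈ S`, `R_e(H,W,b) = 0` iff `(H, W, b)` exhibits strong
neural collapse; i.e. the global minimizers of `R_e` restricted to `S` are precisely
the points exhibiting strong neural collapse. -/
theorem empirical_risk_on_S (C N p : ℕ) (hC : 0 < C) (hN : 0 < N) (hp : 0 < p)
    (H : Matrix (Fin p) (Fin C × Fin N) ℝ) (W : Matrix (Fin C) (Fin p) ℝ) (b : Fin C → ℝ)
    (hS : memS C N p H W b) :
    Re C N p H W b
      = (1 / 2) * ∑ c : Fin C, ∑ c' : Fin C,
          ((W * Wᵀ) c c' - Real.sqrt N * ((if c' = c then 1 else 0) - (C : ℝ)⁻¹)) ^ 2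
        + ((C * N : ℝ) / 2) * ∑ c : Fin C, (b c - (C : ℝ)⁻¹) ^ 2 ∧
    (Re C N p H W b = 0 ↔ SNC C N p H W b) :=
  empirical_risk_on_S_general C N p hC hN H W b hS

end
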